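/- arXiv:1405.0248 — 5 statements merged into one kernel-verified Lean document; each statement's English description precedes it below -/
import Mathlib

section
/- The function δ(h) = (6·sinh(h)·arcsinh(1/(2·sinh(h))))/π is strictly increasing for h > 0. -/
open Real

lemma sinh_strictConvexOn : StrictConvexOn ℝ (Set.Ici (0:ℝ)) Real.sinh := by
  apply strictConvexOn_of_deriv2_pos (convex_Ici 0) Real.continuous_sinh.continuousOn
  intro x hx
  rw [interior_Ici] at hx
  have : deriv (deriv Real.sinh) = Real.sinh := by
    ext y; rw [Real.deriv_sinh, Real.deriv_cosh]
  simp only [Function.iterate_succ, Function.iterate_zero, Function.comp_apply, id_eq]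
  rw [show deriv (deriv Real.sinh) = Real.sinh from this]
  exact Real.sinh_pos_iff.2 hx

lemma key_ineq {A B : ℝ} (hA : 0 < A) (hAB : A < B) :
    B * Real.sinh A < A * Real.sinh B := by
  have hB : 0 < B := hA.trans hAB
  have h := sinh_strictConvexOn.2 (Set.mem_Ici.2 le_rfl) (Set.mem_Ici.2 hB.le)
      (by positivity : (0:ℝ) ≠ B)
      (show (0:ℝ) < 1 - A/B by have : A/B < 1 := (div_lt_one hB).2 hAB; linarith)
      (show (0:ℝ) < A/B by positivity) (by ring)
  simp only [smul_eq_mul, mul_zero, zero_add, Real.sinh_zero] at h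
  have h2 : Real.sinh ((A/B) * B) < (A/B) * Real.sinh B := by linarith
  rw [div_mul_cancel₀ _ hB.ne'] at h2
  have h3 : Real.sinh A * B < A / B * Real.sinh B * B := mul_lt_mul_of_pos_right h2 hB
  rw [mul_right_comm, div_mul_cancel₀ _ hB.ne'] at h3
  linarith

theorem hypercycle_density_strict_mono :
    StrictMonoOn (fun h : ℝ => 6 * Real.sinh h * Real.arsinh (1 / (2 * Real.sinh h)) / π)
      (Set.Ioi 0) := by
  intro a ha b hb hab
  simp only [Set.mem_Ioi] at ha hb
  have hsa : 0 < Real.sinh a := Real.sinh_pos_iff.2 ha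
  have hsb : 0 < Real.sinh b := Real.sinh_pos_iff.2 hb
  have hsab : Real.sinh a < Real.sinh b := Real.sinh_lt_sinh.2 hab
  set u := 1 / (2 * Real.sinh b) with hu
  set v := 1 / (2 * Real.sinh a) with hv
  have hu0 : 0 < u := by positivity
  have huv : u < v := by
    rw [hu, hv]
    apply one_div_lt_one_div_of_lt <;> nlinarith
  set A := Real.arsinh u with hA
  set B := Real.arsinh v with hB
  have hA0 : 0 < A := by rw [hA, ← Real.arsinh_zero]; exact Real.arsinh_lt_arsinh.2 hu0
  have hABlt : A < B := Real.arsinh_lt_arsinh.2 huv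
  have hkey := key_ineq hA0 hABlt
  rw [Real.sinh_arsinh, Real.sinh_arsinh] at hkey
  -- hkey : B * u < A * v
  have h1 : Real.sinh a * B < Real.sinh b * A := by
    rw [hu, hv] at hkey
    have h2 : B * (1 / (2 * Real.sinh b)) < A * (1 / (2 * Real.sinh a)) := hkey
    rw [mul_one_div, mul_one_div, div_lt_div_iff₀ (by positivity) (by positivity)] at h2
    nlinarith
  have hpi : 0 < π := Real.pi_pos
  simp only
  rw [div_lt_div_iff₀ hpi hpi]
  nlinarith
end

section
/- For all h > 0, 6·sinh(h)·arcsinh(1/(2·sinh(h))) < 3. -/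
open Real

theorem Real.arsinh_lt_self_iff {x : ℝ} : arsinh x < x ↔ 0 < x :=
  calc arsinh x < x ↔ arsinh x < arsinh (sinh x) := by rw [arsinh_sinh]
    _ ↔ x < sinh x := arsinh_lt_arsinh
    _ ↔ 0 < x := self_lt_sinh_iff

theorem Real.mul_arsinh_inv_lt_one {t : ℝ} (ht : 0 < t) : t * arsinh t⁻¹ < 1 :=
  calc t * arsinh t⁻¹ < t * t⁻¹ := by gcongr; exact arsinh_lt_self_iff.mpr (inv_pos.mpr ht)
    _ = 1 := mul_inv_cancel₀ ht.ne'

theorem sinh_arsinh_ineq :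
    ∀ h : ℝ, 0 < h →
      6 * Real.sinh h * Real.arsinh (1 / (2 * Real.sinh h)) < 3 := by
  intro h hh
  have hs : 0 < 2 * sinh h := mul_pos two_pos (sinh_pos_iff.mpr hh)
  calc 6 * sinh h * arsinh (1 / (2 * sinh h))
        = 3 * (2 * sinh h * arsinh (2 * sinh h)⁻¹) := by rw [one_div]; ring
    _ < 3 * 1 := by gcongr; exact mul_arsinh_inv_lt_one hs
    _ = 3 := mul_one 3
end

section
/- For h > 0, the derivative of h ↦ sinh(h)·arcsinh(1/(2·sinh(h))) equals cosh(h)·arcsinh(1/(2·sinh(h))) − cosh(h)/sqrt(4·sinh(h)² + 1), and this derivative is positive. -/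
/-!
By the product and chain rules, with `arsinh' u = 1 / √(1 + u²)` and
`√(1 + 1 / (4 sinh² h)) = √(4 sinh² h + 1) / (2 sinh h)`, the derivative takes the stated form.
Its positivity amounts to `u / √(1 + u²) < arsinh u` for `u = 1 / (2 sinh h) > 0`; the left side
is `tanh (arsinh u)`, so this is `tanh t < t` for `t > 0`, which holds because `t cosh t - sinh t`
vanishes at `0` and has derivative `t sinh t > 0`.
-/

open Real

namespace Real

theorem sinh_lt_mul_cosh {t : ℝ} (ht : 0 < t) : sinh t < t * cosh t := by
  have hmono : StrictMonoOn (fun x : ℝ => x * cosh x - sinh x) (Set.Ici 0) := by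
    refine strictMonoOn_of_deriv_pos (convex_Ici 0) (by fun_prop) fun x hx => ?_
    rw [interior_Ici, Set.mem_Ioi] at hx
    have hderiv : HasDerivAt (fun x : ℝ => x * cosh x - sinh x)
        (1 * cosh x + x * sinh x - cosh x) x :=
      ((hasDerivAt_id x).mul (hasDerivAt_cosh x)).sub (hasDerivAt_sinh x)
    rw [hderiv.deriv]
    linarith [mul_pos hx (sinh_pos_iff.2 hx)]
  simpa using hmono Set.self_mem_Ici ht.le ht

theorem tanh_lt_self {t : ℝ} (ht : 0 < t) : tanh t < t := by
  rw [tanh_eq_sinh_div_cosh, div_lt_iff₀ (cosh_pos t)]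
  exact sinh_lt_mul_cosh ht

theorem div_sqrt_one_add_sq_lt_arsinh {u : ℝ} (hu : 0 < u) : u / √(1 + u ^ 2) < arsinh u :=
  tanh_arsinh u ▸ tanh_lt_self (arsinh_pos_iff.2 hu)

theorem sqrt_one_add_one_div_sq {a : ℝ} (ha : 0 < a) :
    √(1 + (1 / a) ^ 2) = √(a ^ 2 + 1) / a := by
  rw [eq_div_iff ha.ne', ← sqrt_sq ha.le, ← sqrt_mul (by positivity)]
  congr 1
  field_simp
  rw [sq_sqrt (sq_nonneg a)]

theorem one_div_sqrt_sq_add_one_lt_arsinh_one_div {a : ℝ} (ha : 0 < a) :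
    1 / √(a ^ 2 + 1) < arsinh (1 / a) := by
  have h := div_sqrt_one_add_sq_lt_arsinh (one_div_pos.2 ha)
  rwa [sqrt_one_add_one_div_sq ha, div_div_div_cancel_right₀ ha.ne'] at h

end Real

theorem hasDerivAt_sinh_mul_arsinh_one_div_two_sinh {h : ℝ} (hh : 0 < h) :
    HasDerivAt (fun x : ℝ => sinh x * arsinh (1 / (2 * sinh x)))
      (cosh h * arsinh (1 / (2 * sinh h)) - cosh h / √(4 * sinh h ^ 2 + 1)) h := by
  have hs : 0 < 2 * sinh h := mul_pos two_pos (sinh_pos_iff.2 hh)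
  have hinv : HasDerivAt (fun x : ℝ => 1 / (2 * sinh x)) (-(2 * cosh h) / (2 * sinh h) ^ 2) h := by
    have h' : HasDerivAt (fun x : ℝ => (2 * sinh x)⁻¹) (-(2 * cosh h) / (2 * sinh h) ^ 2) h :=
      ((hasDerivAt_sinh h).const_mul 2).inv hs.ne'
    simpa only [one_div] using h'
  have hprod : HasDerivAt (fun x : ℝ => sinh x * arsinh (1 / (2 * sinh x)))
      (cosh h * arsinh (1 / (2 * sinh h)) +
        sinh h * ((√(1 + (1 / (2 * sinh h)) ^ 2))⁻¹ * (-(2 * cosh h) / (2 * sinh h) ^ 2))) h :=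
    (hasDerivAt_sinh h).mul ((hasDerivAt_arsinh _).comp h hinv)
  refine hprod.congr_deriv ?_
  have hsq : (2 * sinh h) ^ 2 = 4 * sinh h ^ 2 := by ring
  have hroot : √(4 * sinh h ^ 2 + 1) ≠ 0 := by positivity
  rw [sqrt_one_add_one_div_sq hs, hsq]
  field_simp
  ring

theorem hypercycle_density_deriv (h : ℝ) (hh : 0 < h) :
    HasDerivAt (fun x : ℝ => Real.sinh x * Real.arsinh (1 / (2 * Real.sinh x)))
      (Real.cosh h * Real.arsinh (1 / (2 * Real.sinh h)) -
        Real.cosh h / Real.sqrt (4 * Real.sinh h ^ 2 + 1)) h ∧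
    0 < Real.cosh h * Real.arsinh (1 / (2 * Real.sinh h)) -
        Real.cosh h / Real.sqrt (4 * Real.sinh h ^ 2 + 1) := by
  refine ⟨hasDerivAt_sinh_mul_arsinh_one_div_two_sinh hh, ?_⟩
  have hlt := one_div_sqrt_sq_add_one_lt_arsinh_one_div (mul_pos two_pos (sinh_pos_iff.2 hh))
  rw [mul_pow, show (2 : ℝ) ^ 2 = 4 by norm_num] at hlt
  rw [div_eq_mul_one_div (cosh h), ← mul_sub]
  exact mul_pos (cosh_pos h) (sub_pos.2 hlt)
end

section
/- Let C(p) be the Coxeter–Schläfli matrix with rows (1, −cos(π/p), 0, 0), (−cos(π/p), 1, −1/2, 0), (0, −1/2, 1, −1/2), (0, 0, −1/2, 1) for p > 6, and let H = C(p)⁻¹ with entries h_{ij} (indices 1..4). Then the quantity (h₃₃·h₄₄ − h₃₄²)/(h₃₃·h₄₄) is strictly greater than 1, so cosh h(p) := sqrt((h₃₃·h₄₄ − h₃₄²)/(h₃₃·h₄₄)) defines a positive real number h(p). -/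
open Real

noncomputable def CoxeterSchlafli (p : ℝ) : Matrix (Fin 4) (Fin 4) ℝ :=
  !![1, -Real.cos (π / p), 0, 0;
     -Real.cos (π / p), 1, -(1 / 2), 0;
     0, -(1 / 2), 1, -(1 / 2);
     0, 0, -(1 / 2), 1]

/-!
For `c = cos (π / p)` the Coxeter–Schläfli matrix has determinant `(2 - 3c²) / 4` and its inverse
is `(2 - 3c²)⁻¹` times an explicit integral-polynomial matrix in `c`. In the lower right `2 × 2`
block the common factor cancels, and the quantity of the theorem is `(2 - 3c²) / (3 - 4c²)`.
For `p > 6` we have `3/4 < c² < 1`, so numerator and denominator are both negative and the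
quotient exceeds `1` by `(1 - c²) / (4c² - 3) > 0`. Then `h(p) = arcosh √(…)` is positive.
-/

namespace CoxeterSchlafli

/-- `CoxeterSchlafli p` is definitionally `ofCos (cos (π / p))`. -/
noncomputable def ofCos (c : ℝ) : Matrix (Fin 4) (Fin 4) ℝ :=
  !![1, -c, 0, 0;
     -c, 1, -(1 / 2), 0;
     0, -(1 / 2), 1, -(1 / 2);
     0, 0, -(1 / 2), 1]

/-- The adjugate of `ofCos c`, scaled by `4`. -/
def adjOfCos (c : ℝ) : Matrix (Fin 4) (Fin 4) ℝ :=
  !![2, 3 * c, 2 * c, c;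
     3 * c, 3, 2, 1;
     2 * c, 2, 4 * (1 - c ^ 2), 2 * (1 - c ^ 2);
     c, 1, 2 * (1 - c ^ 2), 3 - 4 * c ^ 2]

lemma ofCos_mul_adjOfCos (c : ℝ) : ofCos c * adjOfCos c = (2 - 3 * c ^ 2) • 1 := by
  ext i j
  fin_cases i <;> fin_cases j <;>
    simp [ofCos, adjOfCos, Matrix.mul_apply, Fin.sum_univ_four] <;> ring

lemma inv_ofCos {c : ℝ} (hc : 3 * c ^ 2 ≠ 2) :
    (ofCos c)⁻¹ = (2 - 3 * c ^ 2)⁻¹ • adjOfCos c := by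
  have hd : (2 : ℝ) - 3 * c ^ 2 ≠ 0 := sub_ne_zero.mpr hc.symm
  refine Matrix.inv_eq_right_inv ?_
  rw [Matrix.mul_smul, ofCos_mul_adjOfCos, smul_smul, inv_mul_cancel₀ hd, one_smul]

end CoxeterSchlafli

open CoxeterSchlafli

lemma block_ratio_mul_left {k : ℝ} (hk : k ≠ 0) (a b e : ℝ) :
    ((k * a) * (k * b) - (k * e) ^ 2) / ((k * a) * (k * b)) = (a * b - e ^ 2) / (a * b) := by
  rw [show (k * a) * (k * b) - (k * e) ^ 2 = k ^ 2 * (a * b - e ^ 2) by ring,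
    show (k * a) * (k * b) = k ^ 2 * (a * b) by ring, mul_div_mul_left _ _ (pow_ne_zero 2 hk)]

lemma inv_ofCos_block_ratio {c : ℝ} (hc : 3 * c ^ 2 ≠ 2) (hc1 : c ^ 2 ≠ 1) :
    let H := (ofCos c)⁻¹
    (H 2 2 * H 3 3 - (H 2 3) ^ 2) / (H 2 2 * H 3 3) = (2 - 3 * c ^ 2) / (3 - 4 * c ^ 2) := by
  have hd : (2 : ℝ) - 3 * c ^ 2 ≠ 0 := sub_ne_zero.mpr hc.symm
  have h1c : (1 : ℝ) - c ^ 2 ≠ 0 := sub_ne_zero.mpr hc1.symm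
  simp only [inv_ofCos hc, Matrix.smul_apply, smul_eq_mul]
  rw [block_ratio_mul_left (inv_ne_zero hd)]
  simp only [adjOfCos, Matrix.of_apply, Matrix.cons_val', Matrix.cons_val, Matrix.empty_val',
    Matrix.cons_val_fin_one]
  rw [show 4 * (1 - c ^ 2) * (3 - 4 * c ^ 2) - (2 * (1 - c ^ 2)) ^ 2
      = (4 * (1 - c ^ 2)) * (2 - 3 * c ^ 2) by ring,
    mul_div_mul_left _ _ (mul_ne_zero four_ne_zero h1c)]

lemma one_lt_div_of_cos_sq_mem {c : ℝ} (hlo : 3 / 4 < c ^ 2) (hhi : c ^ 2 < 1) :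
    1 < (2 - 3 * c ^ 2) / (3 - 4 * c ^ 2) := by
  rw [lt_div_iff_of_neg (by linarith)]
  linarith

lemma three_quarters_lt_cos_sq {θ : ℝ} (h0 : 0 ≤ θ) (h6 : θ < π / 6) : 3 / 4 < cos θ ^ 2 := by
  have hcos : cos (π / 6) < cos θ :=
    cos_lt_cos_of_nonneg_of_le_pi h0 (by linarith [pi_pos]) h6
  rw [← sq_cos_pi_div_six]
  exact pow_lt_pow_left₀ hcos (cos_nonneg_of_mem_Icc ⟨by linarith [pi_pos], by linarith [pi_pos]⟩)
    two_ne_zero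

lemma cos_sq_lt_one {θ : ℝ} (h0 : 0 < θ) (hπ : θ < π) : cos θ ^ 2 < 1 := by
  nlinarith [sin_sq_add_cos_sq θ, sin_pos_of_pos_of_lt_pi h0 hπ]

lemma exists_pos_cosh_eq_sqrt {x : ℝ} (hx : 1 < x) : ∃ h : ℝ, 0 < h ∧ cosh h = √x := by
  have hs : 1 < √x := by rwa [lt_sqrt zero_le_one, one_pow]
  exact ⟨arcosh √x, arcosh_pos hs, cosh_arcosh hs.le⟩

theorem hyperball_height_well_defined (p : ℝ) (hp : 6 < p) :
    let H := (CoxeterSchlafli p)⁻¹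
    1 < (H 2 2 * H 3 3 - (H 2 3) ^ 2) / (H 2 2 * H 3 3) ∧
    ∃ h : ℝ, 0 < h ∧
      Real.cosh h = Real.sqrt ((H 2 2 * H 3 3 - (H 2 3) ^ 2) / (H 2 2 * H 3 3)) := by
  intro H
  have hθ : 0 < π / p := div_pos pi_pos (by linarith)
  have hθ6 : π / p < π / 6 := div_lt_div_of_pos_left pi_pos (by norm_num) hp
  have hlo := three_quarters_lt_cos_sq hθ.le hθ6
  have hhi := cos_sq_lt_one hθ (by linarith [pi_pos])
  have hratio : (H 2 2 * H 3 3 - (H 2 3) ^ 2) / (H 2 2 * H 3 3)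
      = (2 - 3 * cos (π / p) ^ 2) / (3 - 4 * cos (π / p) ^ 2) :=
    inv_ofCos_block_ratio (c := cos (π / p)) (by linarith : (2 : ℝ) < 3 * _).ne' hhi.ne
  have hgt := one_lt_div_of_cos_sq_mem hlo hhi
  rw [hratio]
  exact ⟨hgt, exists_pos_cosh_eq_sqrt hgt⟩
end

section
/- If x ↦ f(x) = sinh(x)·arcsinh(1/(2 sinh x)) on (0,∞), then f is bounded above by 1/2. -/
namespace Real

theorem arsinh_le_self_iff {x : ℝ} : arsinh x ≤ x ↔ 0 ≤ x := by
  rw [← sinh_le_sinh, sinh_arsinh, self_le_sinh_iff]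

theorem mul_arsinh_one_div_two_mul_le {s : ℝ} (hs : 0 < s) :
    s * arsinh (1 / (2 * s)) ≤ 1 / 2 :=
  calc s * arsinh (1 / (2 * s))
      ≤ s * (1 / (2 * s)) := by
        gcongr
        exact arsinh_le_self_iff.mpr (by positivity)
    _ = 1 / 2 := by field_simp

end Real

theorem sinh_arsinh_bounded (x : ℝ) (hx : 0 < x) :
    Real.sinh x * Real.arsinh (1 / (2 * Real.sinh x)) ≤ 1 / 2 :=
  Real.mul_arsinh_one_div_two_mul_le (Real.sinh_pos_iff.mpr hx)
end
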